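/- For each integer p ≥ 2 there exists a linear genome G on {0,...,6p+1} (corresponding to the permutation that concatenates blocks (6i−5)(6i−3)(6i−1)(6i−4)(6i−2)(6i) for i = 1,...,p) such that b(G) = 5p while the lower bound n + 1 + c*(UBG(G)) − 2c₁*(UBG(G)) equals 6p; hence the gap between the cycle-based lower bound and the breakpoint count can be arbitrarily large. -/

import Mathlib

open Classical

/-- The (multiset of) edges of the path visiting the vertices of `l` in order. -/
def pathEdges (l : List ℕ) : Multiset (Sym2 ℕ) :=
  ↑((l.zip l.tail).map fun p => s(p.1, p.2))

/-- `G` is a linear genome on {0,…,n+1}. -/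
def IsLinearGenome (n : ℕ) (G : Multiset (Sym2 ℕ)) : Prop :=
  ∃ l : List ℕ, l.Perm (List.range (n+2)) ∧ l.head? = some 0 ∧
    l.getLast? = some (n+1) ∧ G = pathEdges l

/-- `e` is a breakpoint of `G`. -/
def IsBp (G : Multiset (Sym2 ℕ)) (e : Sym2 ℕ) : Prop :=
  (∀ x ∈ e, x ≠ 0) ∧ (¬ (∃ u, e = s(u, u+1)) ∨ 2 ≤ G.count e)

/-- The number of breakpoints of `G`. -/
noncomputable def bp (G : Multiset (Sym2 ℕ)) : ℕ :=
  (G.filter fun e => IsBp G e).card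

/-- The edge list of the closed walk through the vertices of `l` (with wrap-around). -/
def cycleEdgeList (l : List ℕ) : List (Sym2 ℕ) :=
  (l.zip (l.rotate 1)).map fun p => s(p.1, p.2)

/-- The black (even-position) edges of the closed alternating walk `l`. -/
def blackPart (l : List ℕ) : Multiset (Sym2 ℕ) :=
  ↑((((cycleEdgeList l).zipIdx.filter fun p => p.2 % 2 = 0).map Prod.fst))

/-- The grey (odd-position) edges of the closed alternating walk `l`. -/
def greyPart (l : List ℕ) : Multiset (Sym2 ℕ) :=
  ↑((((cycleEdgeList l).zipIdx.filter fun p => p.2 % 2 = 1).map Prod.fst))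

/-- The grey edges {i, i+1}, 0 ≤ i ≤ n, of the unsigned breakpoint graph. -/
def greyM (n : ℕ) : Multiset (Sym2 ℕ) :=
  ↑((List.range (n+1)).map fun i => s(i, i+1))

/-- `D` is a decomposition of the unsigned breakpoint graph UBG(G) into
edge-disjoint alternating cycles: each member is a closed walk of even length
whose edges alternate black/grey, the black edges exactly cover `G` and the grey
edges exactly cover the identity edges {i, i+1}. -/
def IsDecomp (n : ℕ) (G : Multiset (Sym2 ℕ)) (D : List (List ℕ)) : Prop :=
  (∀ l ∈ D, l ≠ [] ∧ l.length % 2 = 0) ∧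
  (D.map blackPart).sum = G ∧
  (D.map greyPart).sum = greyM n

/-- Number of trivial cycles (exactly one black edge, i.e. two vertices) of `D`. -/
def c1D (D : List (List ℕ)) : ℕ := (D.filter fun l => l.length = 2).length

/-- Number of nontrivial cycles of `D`. -/
def ntD (D : List (List ℕ)) : ℕ := (D.filter fun l => l.length ≠ 2).length

/-- `D` is an optimal decomposition: it minimises c − 2c₁. -/
def OptDecomp (n : ℕ) (G : Multiset (Sym2 ℕ)) (D : List (List ℕ)) : Prop :=
  IsDecomp n G D ∧ ∀ E, IsDecomp n G E →
    (D.length : ℤ) - 2 * c1D D ≤ (E.length : ℤ) - 2 * c1D E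

def blk (i : ℕ) : List ℕ := [6*i+1, 6*i+3, 6*i+5, 6*i+2, 6*i+4, 6*i+6]
def lcore (p : ℕ) : List ℕ := (List.range p).flatMap blk
def lgen (p : ℕ) : List ℕ := 0 :: (lcore p ++ [6*p+1])

lemma lcore_succ (p : ℕ) : lcore (p+1) = lcore p ++ blk p := by
  simp [lcore, List.range_succ]

lemma lgen_coe (p : ℕ) : (lgen p : Multiset ℕ) = ↑(List.range (6*p+2)) := by
  induction p with
  | zero => rfl
  | succ p ih =>
    have h1 : 6*(p+1)+2 = (6*p+2)+6 := by ring
    rw [h1, List.range_add]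
    have h2 : (List.range 6).map ((6*p+2) + ·) = [6*p+2,6*p+3,6*p+4,6*p+5,6*p+6,6*p+7] := by
      simp [List.range_succ]
    rw [h2]
    have h3 : lgen (p+1) = (0 :: (lcore p ++ [6*p+1])) ++ [6*p+3,6*p+5,6*p+2,6*p+4,6*p+6,6*p+7] := by
      simp [lgen, lcore_succ, blk, List.append_assoc]
      omega
    rw [h3]
    push_cast [← Multiset.coe_add]
    rw [show ((0 :: (lcore p ++ [6*p+1]) : List ℕ) : Multiset ℕ) = ↑(lgen p) from rfl, ih]
    congr 1
    rw [Multiset.coe_eq_coe]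
    exact ((List.Perm.cons _ (List.Perm.swap _ _ _)).trans (List.Perm.swap _ _ _)).trans
      (List.Perm.cons _ (List.Perm.cons _ (List.Perm.swap _ _ _)))

lemma lgen_perm (p : ℕ) : (lgen p).Perm (List.range (6*p+2)) :=
  Multiset.coe_eq_coe.mp (lgen_coe p)

def blkE (i : ℕ) : List (Sym2 ℕ) :=
  [s(6*i,6*i+1), s(6*i+1,6*i+3), s(6*i+3,6*i+5), s(6*i+5,6*i+2), s(6*i+2,6*i+4), s(6*i+4,6*i+6)]
def coreE (p : ℕ) : List (Sym2 ℕ) := (List.range p).flatMap blkE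
def edgeL (p : ℕ) : List (Sym2 ℕ) := coreE p ++ [s(6*p,6*p+1)]

lemma coreE_succ (p : ℕ) : coreE (p+1) = coreE p ++ blkE p := by
  simp [coreE, List.range_succ]

lemma pathEdges_cons2 (x y : ℕ) (t : List ℕ) :
    pathEdges (x :: y :: t) = s(x,y) ::ₘ pathEdges (y :: t) := rfl

lemma pathEdges_append (a : ℕ) (l1 l2 : List ℕ) :
    pathEdges (l1 ++ a :: l2) = pathEdges (l1 ++ [a]) + pathEdges (a :: l2) := by
  induction l1 with
  | nil => simp [pathEdges]
  | cons x l1 ih =>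
    cases l1 with
    | nil =>
      show pathEdges (x :: a :: l2) = _
      rw [pathEdges_cons2]
      show _ = pathEdges (x :: [a]) + _
      rw [pathEdges_cons2]
      simp [pathEdges]
    | cons y l1' =>
      show pathEdges (x :: y :: (l1' ++ a :: l2)) = pathEdges (x :: y :: (l1' ++ [a])) + pathEdges (a :: l2)
      rw [pathEdges_cons2, pathEdges_cons2]
      have ih' : pathEdges (y :: (l1' ++ a :: l2)) = pathEdges (y :: (l1' ++ [a])) + pathEdges (a :: l2) := ih
      rw [ih', Multiset.cons_add]

lemma pathEdges_lgen (p : ℕ) : pathEdges (lgen p) = ↑(edgeL p) := by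
  induction p with
  | zero => rfl
  | succ p ih =>
    have h66 : 6*(p+1) = 6*p+6 := by ring
    have h3 : lgen (p+1) = (0 :: lcore p) ++ (6*p+1) :: ([6*p+3,6*p+5,6*p+2,6*p+4,6*p+6] ++ [6*p+7]) := by
      simp [lgen, lcore_succ, blk, List.append_assoc]
      try omega
    have h7 : edgeL (p+1) = coreE p ++ (blkE p ++ [s(6*p+6, 6*p+7)]) := by
      rw [edgeL, coreE_succ, h66]
      simp
    rw [h3, h7, pathEdges_append]
    have h4 : (0 :: lcore p) ++ [6*p+1] = lgen p := rfl
    rw [h4, ih]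
    have h5 : pathEdges ((6*p+1) :: ([6*p+3,6*p+5,6*p+2,6*p+4,6*p+6] ++ [6*p+7]))
        = ↑[s(6*p+1,6*p+3), s(6*p+3,6*p+5), s(6*p+5,6*p+2), s(6*p+2,6*p+4), s(6*p+4,6*p+6),
            s(6*p+6,6*p+7)] := rfl
    rw [h5]
    have h9 : ((edgeL p : List (Sym2 ℕ)) : Multiset (Sym2 ℕ)) = ↑(coreE p) + ↑[s(6*p,6*p+1)] := by
      rw [edgeL]
      push_cast [← Multiset.coe_add]
      try rfl
    have h8 : ((blkE p : List (Sym2 ℕ)) : Multiset (Sym2 ℕ)) = ↑[s(6*p,6*p+1)] +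
        ↑[s(6*p+1,6*p+3), s(6*p+3,6*p+5), s(6*p+5,6*p+2), s(6*p+2,6*p+4), s(6*p+4,6*p+6)] := by
      rw [show (blkE p : List (Sym2 ℕ)) = [s(6*p,6*p+1)] ++
        [s(6*p+1,6*p+3), s(6*p+3,6*p+5), s(6*p+5,6*p+2), s(6*p+2,6*p+4), s(6*p+4,6*p+6)] from rfl]
      push_cast [← Multiset.coe_add]
      try rfl
    rw [h9]
    push_cast [← Multiset.coe_add]
    rw [h8]
    abel

def Gp (p : ℕ) : Multiset (Sym2 ℕ) := ↑(edgeL p)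

lemma adj_iff (a b : ℕ) : (∃ u, s(a,b) = s(u,u+1)) ↔ (b = a+1 ∨ a = b+1) := by
  constructor
  · rintro ⟨u, h⟩; rw [Sym2.eq_iff] at h; omega
  · rintro (h|h)
    · exact ⟨a, by rw [h]⟩
    · exact ⟨b, by rw [h, Sym2.eq_swap]⟩

def esum : Sym2 ℕ → ℕ := Sym2.lift ⟨fun a b => a + b, fun _ _ => Nat.add_comm _ _⟩

@[simp] lemma esum_mk (a b : ℕ) : esum s(a,b) = a + b := rfl

lemma nodup_coreE_sums (q : ℕ) : ((coreE q).map esum).Nodup ∧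
    ∀ x ∈ (coreE q).map esum, x < 12*q := by
  induction q with
  | zero => simp [coreE]
  | succ q ih =>
    rw [coreE_succ, List.map_append]
    constructor
    · refine List.Nodup.append ih.1 ?_ ?_
      · simp [blkE]; omega
      · intro x hx hx2
        have h1 := ih.2 x hx
        simp [blkE] at hx2
        omega
    · intro x hx
      rcases List.mem_append.mp hx with h | h
      · have := ih.2 x h; omega
      · simp [blkE] at h; omega

lemma nodup_edgeL (p : ℕ) : (edgeL p).Nodup := by
  have key := nodup_coreE_sums p
  have h2 : ((edgeL p).map esum).Nodup := by
    rw [edgeL, List.map_append]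
    refine List.Nodup.append key.1 (by simp) ?_
    intro x hx hx2
    have := key.2 x hx
    simp at hx2
    omega
  exact h2.of_map esum

lemma nodup_Gp (p : ℕ) : (Gp p).Nodup := nodup_edgeL p

lemma mem_edgeL {p : ℕ} {e : Sym2 ℕ} :
    e ∈ edgeL p ↔ (∃ i < p, e ∈ blkE i) ∨ e = s(6*p,6*p+1) := by
  simp [edgeL, coreE, List.mem_flatMap, List.mem_range, List.mem_append]

def Padj (e : Sym2 ℕ) : Prop := (∀ x ∈ e, x ≠ 0) ∧ ¬ (∃ u, e = s(u, u+1))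

lemma count_le_one_Gp (p : ℕ) (e : Sym2 ℕ) : (Gp p).count e ≤ 1 :=
  Multiset.nodup_iff_count_le_one.mp (nodup_Gp p) e

lemma bp_Gp (p : ℕ) : bp (Gp p) = 5*p := by
  have hcongr : ((Gp p).filter fun e => IsBp (Gp p) e) = (Gp p).filter Padj := by
    refine Multiset.filter_congr ?_
    intro e he
    have h1 := count_le_one_Gp p e
    unfold IsBp Padj
    constructor
    · rintro ⟨ha, hb | hb⟩
      · exact ⟨ha, hb⟩
      · omega
    · rintro ⟨ha, hb⟩; exact ⟨ha, Or.inl hb⟩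
  have hcore : ∀ q, ((Multiset.filter Padj ↑(coreE q)).card) = 5*q := by
    intro q
    induction q with
    | zero => simp [coreE]
    | succ q ih =>
      rw [coreE_succ]
      push_cast [← Multiset.coe_add]
      rw [Multiset.filter_add, Multiset.card_add, ih]
      have hblk : (Multiset.filter Padj ↑(blkE q)).card = 5 := by
        rw [show ((blkE q : List (Sym2 ℕ)) : Multiset (Sym2 ℕ)) =
          s(6*q,6*q+1) ::ₘ s(6*q+1,6*q+3) ::ₘ s(6*q+3,6*q+5) ::ₘ s(6*q+5,6*q+2) ::ₘ
            s(6*q+2,6*q+4) ::ₘ {s(6*q+4,6*q+6)} from rfl]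
        rw [Multiset.filter_cons_of_neg _ (by
          unfold Padj; rw [adj_iff]; intro h; exact h.2 (Or.inl rfl))]
        rw [Multiset.filter_cons_of_pos _ (by
          refine ⟨?_, ?_⟩
          · intro x hx; rw [Sym2.mem_iff] at hx; omega
          · rw [adj_iff]; omega)]
        rw [Multiset.filter_cons_of_pos _ (by
          refine ⟨?_, ?_⟩
          · intro x hx; rw [Sym2.mem_iff] at hx; omega
          · rw [adj_iff]; omega)]
        rw [Multiset.filter_cons_of_pos _ (by
          refine ⟨?_, ?_⟩
          · intro x hx; rw [Sym2.mem_iff] at hx; omega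
          · rw [adj_iff]; omega)]
        rw [Multiset.filter_cons_of_pos _ (by
          refine ⟨?_, ?_⟩
          · intro x hx; rw [Sym2.mem_iff] at hx; omega
          · rw [adj_iff]; omega)]
        rw [show ({s(6*q+4,6*q+6)} : Multiset (Sym2 ℕ)) = s(6*q+4,6*q+6) ::ₘ 0 from rfl]
        rw [Multiset.filter_cons_of_pos _ (by
          refine ⟨?_, ?_⟩
          · intro x hx; rw [Sym2.mem_iff] at hx; omega
          · rw [adj_iff]; omega)]
        simp
      omega
  rw [bp, hcongr]
  rw [show Gp p = ↑(coreE p ++ [s(6*p,6*p+1)]) from rfl]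
  push_cast [← Multiset.coe_add]
  rw [Multiset.filter_add, Multiset.card_add, hcore p]
  have : (Multiset.filter Padj ({s(6*p,6*p+1)} : Multiset (Sym2 ℕ))).card = 0 := by
    rw [show ({s(6*p,6*p+1)} : Multiset (Sym2 ℕ)) = s(6*p,6*p+1) ::ₘ 0 from rfl]
    rw [Multiset.filter_cons_of_neg _ (by
      unfold Padj; rw [adj_iff]; intro h; exact h.2 (Or.inl rfl))]
    simp
  omega

def Tcyc (i : ℕ) : List ℕ := [6*i, 6*i+1]
def Bcyc (i : ℕ) : List ℕ :=
  [6*i+1, 6*i+3, 6*i+4, 6*i+6, 6*i+5, 6*i+3, 6*i+2, 6*i+5, 6*i+4, 6*i+2]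
def D0 (p : ℕ) : List (List ℕ) := (List.range (p+1)).map Tcyc ++ (List.range p).map Bcyc

lemma blackT (i : ℕ) : blackPart (Tcyc i) = {s(6*i,6*i+1)} := by
  simp [blackPart, cycleEdgeList, Tcyc, List.rotate, List.zipIdx]
lemma greyT (i : ℕ) : greyPart (Tcyc i) = {s(6*i,6*i+1)} := by
  rw [show greyPart (Tcyc i) = {s(6*i+1,6*i)} by simp [greyPart, cycleEdgeList, Tcyc, List.rotate, List.zipIdx]]
  rw [Sym2.eq_swap]

lemma blackB (i : ℕ) : blackPart (Bcyc i) =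
    ↑[s(6*i+1,6*i+3), s(6*i+3,6*i+5), s(6*i+5,6*i+2), s(6*i+2,6*i+4), s(6*i+4,6*i+6)] := by
  have h : blackPart (Bcyc i) =
      ↑[s(6*i+1,6*i+3), s(6*i+4,6*i+6), s(6*i+5,6*i+3), s(6*i+2,6*i+5), s(6*i+4,6*i+2)] := by
    simp [blackPart, cycleEdgeList, Bcyc, List.rotate, List.zipIdx, List.filter]
  rw [h, show s(6*i+5,6*i+3) = s(6*i+3,6*i+5) from Sym2.eq_swap,
      show s(6*i+2,6*i+5) = s(6*i+5,6*i+2) from Sym2.eq_swap,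
      show s(6*i+4,6*i+2) = s(6*i+2,6*i+4) from Sym2.eq_swap]
  simp only [← Multiset.cons_coe, ← Multiset.singleton_add, Multiset.coe_nil, add_zero]
  abel

lemma greyB (i : ℕ) : greyPart (Bcyc i) =
    ↑[s(6*i+1,6*i+2), s(6*i+2,6*i+3), s(6*i+3,6*i+4), s(6*i+4,6*i+5), s(6*i+5,6*i+6)] := by
  have h : greyPart (Bcyc i) =
      ↑[s(6*i+3,6*i+4), s(6*i+6,6*i+5), s(6*i+3,6*i+2), s(6*i+5,6*i+4), s(6*i+2,6*i+1)] := by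
    simp [greyPart, cycleEdgeList, Bcyc, List.rotate, List.zipIdx, List.filter]
  rw [h, show s(6*i+6,6*i+5) = s(6*i+5,6*i+6) from Sym2.eq_swap,
      show s(6*i+3,6*i+2) = s(6*i+2,6*i+3) from Sym2.eq_swap,
      show s(6*i+5,6*i+4) = s(6*i+4,6*i+5) from Sym2.eq_swap,
      show s(6*i+2,6*i+1) = s(6*i+1,6*i+2) from Sym2.eq_swap]
  simp only [← Multiset.cons_coe, ← Multiset.singleton_add, Multiset.coe_nil, add_zero]
  abel

def tB (q : ℕ) : Multiset (Sym2 ℕ) := (((List.range q).map Tcyc).map blackPart).sum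
def bB (q : ℕ) : Multiset (Sym2 ℕ) := (((List.range q).map Bcyc).map blackPart).sum
def tG (q : ℕ) : Multiset (Sym2 ℕ) := (((List.range q).map Tcyc).map greyPart).sum
def bG (q : ℕ) : Multiset (Sym2 ℕ) := (((List.range q).map Bcyc).map greyPart).sum

lemma tB_succ (q : ℕ) : tB (q+1) = tB q + {s(6*q,6*q+1)} := by
  rw [tB, tB, List.range_succ]; simp [blackT]
lemma tG_succ (q : ℕ) : tG (q+1) = tG q + {s(6*q,6*q+1)} := by
  rw [tG, tG, List.range_succ]; simp [greyT]
lemma bB_succ (q : ℕ) : bB (q+1) = bB q +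
    ↑[s(6*q+1,6*q+3), s(6*q+3,6*q+5), s(6*q+5,6*q+2), s(6*q+2,6*q+4), s(6*q+4,6*q+6)] := by
  rw [bB, bB, List.range_succ]; simp [blackB]
lemma bG_succ (q : ℕ) : bG (q+1) = bG q +
    ↑[s(6*q+1,6*q+2), s(6*q+2,6*q+3), s(6*q+3,6*q+4), s(6*q+4,6*q+5), s(6*q+5,6*q+6)] := by
  rw [bG, bG, List.range_succ]; simp [greyB]

lemma blkE_split (p : ℕ) : ((blkE p : List (Sym2 ℕ)) : Multiset (Sym2 ℕ)) =
    {s(6*p,6*p+1)} +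
      ↑[s(6*p+1,6*p+3), s(6*p+3,6*p+5), s(6*p+5,6*p+2), s(6*p+2,6*p+4), s(6*p+4,6*p+6)] := by
  rw [show (blkE p : List (Sym2 ℕ)) = [s(6*p,6*p+1)] ++
    [s(6*p+1,6*p+3), s(6*p+3,6*p+5), s(6*p+5,6*p+2), s(6*p+2,6*p+4), s(6*p+4,6*p+6)] from rfl]
  push_cast [← Multiset.coe_add]
  simp

lemma blacksum (p : ℕ) : tB (p+1) + bB p = ↑(edgeL p) := by
  induction p with
  | zero =>
    rw [tB, bB]
    simp [List.range_succ, blackT, edgeL, coreE]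
  | succ p ih =>
    rw [tB_succ, bB_succ]
    have hE : (↑(edgeL (p+1)) : Multiset (Sym2 ℕ)) = ↑(edgeL p) +
        ↑[s(6*p+1,6*p+3), s(6*p+3,6*p+5), s(6*p+5,6*p+2), s(6*p+2,6*p+4), s(6*p+4,6*p+6)] +
        {s(6*(p+1),6*(p+1)+1)} := by
      rw [edgeL, coreE_succ, edgeL]
      push_cast [← Multiset.coe_add]
      rw [blkE_split]
      abel
    rw [hE, ← ih]
    abel

lemma greyM_succ (p : ℕ) : greyM (6*(p+1)) = greyM (6*p) +
    ↑[s(6*p+1,6*p+2), s(6*p+2,6*p+3), s(6*p+3,6*p+4), s(6*p+4,6*p+5), s(6*p+5,6*p+6),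
      s(6*p+6,6*p+7)] := by
  rw [greyM, greyM, show 6*(p+1)+1 = (6*p+1) + 6 from by ring, List.range_add, List.map_append]
  push_cast [← Multiset.coe_add]
  congr 1

lemma greysum (p : ℕ) : tG (p+1) + bG p = greyM (6*p) := by
  induction p with
  | zero =>
    rw [tG, bG]
    simp [List.range_succ, greyT, greyM]
  | succ p ih =>
    rw [tG_succ, bG_succ, greyM_succ, ← ih]
    rw [show 6*(p+1) = 6*p+6 from by ring, show (6*p+6)+1 = 6*p+7 from rfl]
    rw [show (([s(6*p+1,6*p+2), s(6*p+2,6*p+3), s(6*p+3,6*p+4), s(6*p+4,6*p+5), s(6*p+5,6*p+6),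
      s(6*p+6,6*p+7)] : List (Sym2 ℕ)) : Multiset (Sym2 ℕ)) =
      ↑[s(6*p+1,6*p+2), s(6*p+2,6*p+3), s(6*p+3,6*p+4), s(6*p+4,6*p+5), s(6*p+5,6*p+6)] +
      {s(6*p+6,6*p+7)} from by
      simp only [← Multiset.cons_coe, ← Multiset.singleton_add, Multiset.coe_nil, add_zero]
      abel]
    abel

lemma isDecomp_D0 (p : ℕ) : IsDecomp (6*p) (Gp p) (D0 p) := by
  refine ⟨?_, ?_, ?_⟩
  · intro l hl
    rcases List.mem_append.mp hl with h | h <;> rcases List.mem_map.mp h with ⟨i, _, rfl⟩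
    · exact ⟨by simp [Tcyc], by simp [Tcyc]⟩
    · exact ⟨by simp [Bcyc], by simp [Bcyc]⟩
  · rw [D0, List.map_append, List.sum_append]
    exact blacksum p
  · rw [D0, List.map_append, List.sum_append]
    exact greysum p

lemma len_D0 (p : ℕ) : (D0 p).length = 2*p+1 := by
  simp [D0]; ring

lemma c1_D0 (p : ℕ) : c1D (D0 p) = p+1 := by
  rw [c1D, D0, List.filter_append]
  rw [List.filter_eq_self.mpr (by
    intro l hl
    rcases List.mem_map.mp hl with ⟨i, _, rfl⟩
    simp [Tcyc])]
  rw [List.filter_eq_nil_iff.mpr (by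
    intro l hl
    rcases List.mem_map.mp hl with ⟨i, _, rfl⟩
    simp [Bcyc])]
  simp

section helpers
variable {α : Type*}

lemma count_list_sum [DecidableEq α] (L : List (Multiset α)) (a : α) :
    L.sum.count a = (L.map fun m => m.count a).sum := by
  induction L with
  | nil => simp
  | cons m L ih => simp [Multiset.count_add, ih]

lemma mem_le_sum {L : List ℕ} {x : ℕ} (h : x ∈ L) : x ≤ L.sum := by
  induction L with
  | nil => simp at h
  | cons y L ih =>
    rcases List.mem_cons.mp h with rfl | h
    · simp
    · have := ih h; simp; omega

lemma sum_eq_zero_mem {L : List ℕ} (h : L.sum = 0) {x : ℕ} (hx : x ∈ L) : x = 0 := by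
  have := mem_le_sum hx; omega

lemma exists_of_sum_pos {L : List ℕ} (h : 1 ≤ L.sum) : ∃ x ∈ L, 1 ≤ x := by
  induction L with
  | nil => simp at h
  | cons y L ih =>
    rcases Nat.eq_zero_or_pos y with hy | hy
    · rw [List.sum_cons, hy, Nat.zero_add] at h
      rcases ih h with ⟨x, hx, h1⟩
      exact ⟨x, by simp [hx], h1⟩
    · exact ⟨y, by simp, hy⟩

lemma map_sum_split (E : List α) (q : α → Bool) (g : α → ℕ) :
    ((E.filter q).map g).sum + ((E.filter (fun x => ! q x)).map g).sum = (E.map g).sum := by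
  induction E with
  | nil => simp
  | cons l E ih =>
    by_cases h : q l
    · simp [List.filter_cons, h]; omega
    · simp only [Bool.not_eq_true] at h
      simp [List.filter_cons, h]; omega

lemma count_map_eq_sum (L : List α) (f : α → ℕ) (j : ℕ) :
    (L.map f).count j = (L.map (fun x => if f x = j then 1 else 0)).sum := by
  induction L with
  | nil => simp
  | cons x L ih =>
    simp only [List.map_cons, List.sum_cons, ← ih]
    by_cases h : f x = j
    · simp [h, List.count_cons]
      try omega
    · simp [List.count_cons, h, Ne.symm h]
      try omega

end helpers

lemma length_eq_c1_add_nt (E : List (List ℕ)) : E.length = c1D E + ntD E := by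
  rw [c1D, ntD]
  induction E with
  | nil => simp
  | cons l E ih =>
    by_cases h : l.length = 2
    · simp [List.filter_cons, h, ih]; omega
    · simp [List.filter_cons, h, ih]; omega

-- trivial cycle structure
lemma trivial_parts {l : List ℕ} (h : l.length = 2) :
    ∃ a b, l = [a, b] ∧ blackPart l = {s(a,b)} ∧ greyPart l = {s(a,b)} := by
  match l, h with
  | [a, b], _ =>
    refine ⟨a, b, rfl, by simp [blackPart, cycleEdgeList, List.rotate, List.zipIdx], ?_⟩
    rw [show greyPart [a,b] = {s(b,a)} by simp [greyPart, cycleEdgeList, List.rotate, List.zipIdx]]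
    rw [Sym2.eq_swap]

lemma mem_greyM {n : ℕ} {e : Sym2 ℕ} (h : e ∈ greyM n) : ∃ i ≤ n, e = s(i,i+1) := by
  rw [greyM] at h
  rcases Multiset.mem_coe.mp h with h
  rcases List.mem_map.mp h with ⟨i, hi, rfl⟩
  exact ⟨i, by simpa using Nat.lt_succ_iff.mp (List.mem_range.mp hi), rfl⟩

lemma nodup_greyM (n : ℕ) : (greyM n).Nodup := by
  refine List.Nodup.map ?_ List.nodup_range
  intro i j h
  rw [Sym2.eq_iff] at h
  omega

lemma count_greyM {n i : ℕ} (h : i ≤ n) : (greyM n).count s(i,i+1) = 1 := by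
  refine Multiset.count_eq_one_of_mem (nodup_greyM n) ?_
  rw [greyM]
  exact Multiset.mem_coe.mpr (List.mem_map.mpr ⟨i, List.mem_range.mpr (by omega), rfl⟩)

lemma count_Gp_boundary {p j : ℕ} (h : j ≤ p) : (Gp p).count s(6*j,6*j+1) = 1 := by
  refine Multiset.count_eq_one_of_mem (nodup_Gp p) ?_
  rw [Gp]
  refine Multiset.mem_coe.mpr (mem_edgeL.mpr ?_)
  rcases Nat.lt_or_ge j p with h' | h'
  · exact Or.inl ⟨j, h', by simp [blkE]⟩
  · have : j = p := by omega
    subst this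
    exact Or.inr rfl

lemma boundary_shape {p : ℕ} {e : Sym2 ℕ} (h : e ∈ edgeL p) (h2 : ∃ u, e = s(u,u+1)) :
    ∃ j ≤ p, e = s(6*j,6*j+1) := by
  rcases mem_edgeL.mp h with ⟨i, hi, hb⟩ | rfl
  · simp only [blkE, List.mem_cons, List.not_mem_nil, or_false] at hb
    rcases hb with rfl | rfl | rfl | rfl | rfl | rfl
    · exact ⟨i, by omega, rfl⟩
    all_goals (rw [adj_iff] at h2; omega)
  · exact ⟨p, le_refl _, rfl⟩

-- block edge membership
lemma blockedge_mem {p j : ℕ} (h : j < p) : s(6*j+1,6*j+3) ∈ Gp p := by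
  exact Multiset.mem_coe.mpr (mem_edgeL.mpr (Or.inl ⟨j, h, by simp [blkE]⟩))

-- edges of cycles: endpoints are members
lemma cycleEdge_endpoints {l : List ℕ} {e : Sym2 ℕ} (h : e ∈ cycleEdgeList l) :
    ∃ u v, e = s(u,v) ∧ u ∈ l ∧ v ∈ l := by
  rcases List.mem_map.mp h with ⟨pr, hpr, rfl⟩
  have h1 := List.of_mem_zip hpr
  exact ⟨pr.1, pr.2, rfl, h1.1, (List.mem_rotate).mp h1.2⟩

lemma black_sub_cycle {l : List ℕ} {e : Sym2 ℕ} (h : e ∈ blackPart l) : e ∈ cycleEdgeList l := by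
  unfold blackPart at h
  rcases Multiset.mem_coe.mp h with h
  rcases List.mem_map.mp h with ⟨pr, hpr, rfl⟩
  exact List.fst_mem_of_mem_zipIdx (List.mem_of_mem_filter hpr)

lemma grey_sub_cycle {l : List ℕ} {e : Sym2 ℕ} (h : e ∈ greyPart l) : e ∈ cycleEdgeList l := by
  unfold greyPart at h
  rcases Multiset.mem_coe.mp h with h
  rcases List.mem_map.mp h with ⟨pr, hpr, rfl⟩
  exact List.fst_mem_of_mem_zipIdx (List.mem_of_mem_filter hpr)

lemma cycle_black_or_grey {l : List ℕ} {e : Sym2 ℕ} (h : e ∈ cycleEdgeList l) :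
    e ∈ blackPart l ∨ e ∈ greyPart l := by
  rcases List.mem_iff_get.mp h with ⟨k, hk⟩
  have hk2 : (e, k.1) ∈ (cycleEdgeList l).zipIdx := by
    rw [← hk]
    exact List.mem_zipIdx_iff_getElem?.mpr (by simp)
  by_cases hpar : k.1 % 2 = 0
  · left
    refine Multiset.mem_coe.mpr (List.mem_map.mpr ⟨(e, k.1), ?_, rfl⟩)
    exact List.mem_filter.mpr ⟨hk2, by simp [hpar]⟩
  · right
    refine Multiset.mem_coe.mpr (List.mem_map.mpr ⟨(e, k.1), ?_, rfl⟩)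
    exact List.mem_filter.mpr ⟨hk2, by simp; omega⟩

-- consecutive vertices of a cycle are joined by an edge
lemma consecutive_edge {l : List ℕ} {k : ℕ} (hk : k + 1 < l.length) :
    s(l[k], l[k+1]) ∈ cycleEdgeList l := by
  have hrl : (l.rotate 1).length = l.length := by simp
  have hzl : (l.zip (l.rotate 1)).length = l.length := by simp
  have hk0 : k < (l.zip (l.rotate 1)).length := by omega
  have h3 : (k+1) % l.length = k+1 := Nat.mod_eq_of_lt hk
  have h4 : (l.zip (l.rotate 1))[k] = (l[k], l[k+1]) := by
    rw [List.getElem_zip, List.getElem_rotate]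
    simp [h3]
  have hmem : (l.zip (l.rotate 1))[k] ∈ l.zip (l.rotate 1) := List.getElem_mem _
  rw [h4] at hmem
  exact List.mem_map.mpr ⟨_, hmem, rfl⟩

lemma key_bound (p : ℕ) (E : List (List ℕ)) (hE : IsDecomp (6*p) (Gp p) E) :
    c1D E ≤ ntD E + 1 := by
  obtain ⟨hne, hB, hG⟩ := hE
  have countB : ∀ a : Sym2 ℕ, ((E.map fun l => (blackPart l).count a)).sum = (Gp p).count a := by
    intro a; rw [← hB, count_list_sum, List.map_map]; rfl
  have countG : ∀ a : Sym2 ℕ, ((E.map fun l => (greyPart l).count a)).sum = (greyM (6*p)).count a := by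
    intro a; rw [← hG, count_list_sum, List.map_map]; rfl
  set TL := E.filter (fun l => decide (l.length = 2)) with hTL
  have hc1TL : c1D E = TL.length := rfl
  -- each trivial cycle consumes one boundary edge
  have hTLspec : ∀ l : List ℕ, ∃ j : ℕ, l ∈ TL →
      j ≤ p ∧ greyPart l = {s(6*j,6*j+1)} ∧ blackPart l = {s(6*j,6*j+1)} := by
    intro l
    by_cases hl : l ∈ TL
    · obtain ⟨hlE, hlen⟩ := List.mem_filter.mp hl
      rw [decide_eq_true_eq] at hlen
      obtain ⟨a, b, rfl, hbp, hgp⟩ := trivial_parts hlen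
      have h1 : 1 ≤ ((blackPart [a,b]).count s(a,b)) := by rw [hbp]; simp
      have h2 : ((blackPart [a,b]).count s(a,b)) ≤ (Gp p).count s(a,b) := by
        rw [← countB]; exact mem_le_sum (List.mem_map_of_mem hlE)
      have h3 : s(a,b) ∈ edgeL p := by
        have h25 : 1 ≤ (Gp p).count s(a,b) := le_trans h1 h2
        exact Multiset.mem_coe.mp (Multiset.one_le_count_iff_mem.mp h25)
      have h4 : 1 ≤ ((greyPart [a,b]).count s(a,b)) := by rw [hgp]; simp
      have h5 : ((greyPart [a,b]).count s(a,b)) ≤ (greyM (6*p)).count s(a,b) := by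
        rw [← countG]; exact mem_le_sum (List.mem_map_of_mem hlE)
      have h6 : s(a,b) ∈ greyM (6*p) := by
        have h45 : 1 ≤ (greyM (6*p)).count s(a,b) := le_trans h4 h5
        exact Multiset.one_le_count_iff_mem.mp h45
      obtain ⟨i, hi, hei⟩ := mem_greyM h6
      obtain ⟨j, hj, hej⟩ := boundary_shape h3 ⟨i, hei⟩
      exact ⟨j, fun _ => ⟨hj, by rw [hgp, hej], by rw [hbp, hej]⟩⟩
    · exact ⟨0, fun h => absurd h hl⟩
  choose jf hjf using hTLspec
  set JL := TL.map jf with hJL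
  set I : Finset ℕ := JL.toFinset with hI
  have hIp : ∀ j ∈ I, j ≤ p := by
    intro j hj
    obtain ⟨l, hl, rfl⟩ := List.mem_map.mp (List.mem_toFinset.mp hj)
    exact (hjf l hl).1
  -- each boundary grey edge is used at most once in total
  have htotG : ∀ j : ℕ, j ≤ p → ((E.map fun l => (greyPart l).count s(6*j,6*j+1))).sum = 1 := by
    intro j hj
    rw [countG]
    exact count_greyM (by omega)
  have hsplitG : ∀ j : ℕ,
      ((TL.map fun l => (greyPart l).count s(6*j,6*j+1))).sum +
      (((E.filter (fun l => ! decide (l.length = 2))).map fun l => (greyPart l).count s(6*j,6*j+1))).sum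
      = ((E.map fun l => (greyPart l).count s(6*j,6*j+1))).sum := by
    intro j
    exact map_sum_split E _ _
  -- nodup of boundary indices
  have hnodupJL : JL.Nodup := by
    rw [List.nodup_iff_count_le_one]
    intro j
    by_cases hjp : j ≤ p
    · have hcnt : JL.count j = (TL.map (fun l => if jf l = j then 1 else 0)).sum := by
        rw [hJL, count_map_eq_sum]
      have hle : (TL.map (fun l => if jf l = j then 1 else 0)).sum ≤
          ((TL.map fun l => (greyPart l).count s(6*j,6*j+1))).sum := by
        apply List.sum_le_sum
        intro l hl
        by_cases h : jf l = j
        · rw [if_pos h]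
          have := (hjf l hl).2.1
          rw [this, h]
          simp
        · rw [if_neg h]; omega
      have := hsplitG j
      have := htotG j hjp
      omega
    · have : JL.count j = 0 := by
        rw [List.count_eq_zero]
        intro hmem
        obtain ⟨l, hl, rfl⟩ := List.mem_map.mp hmem
        exact hjp (hjf l hl).1
      omega
  have hcard : I.card = c1D E := by
    rw [hI, List.toFinset_card_of_nodup hnodupJL, hJL, List.length_map, hc1TL]
  -- grey/black edges at chosen boundaries are fully consumed by trivial cycles
  have htj_pos : ∀ j ∈ I, 1 ≤ ((TL.map fun l => (greyPart l).count s(6*j,6*j+1))).sum := by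
    intro j hj
    obtain ⟨l, hl, rfl⟩ := List.mem_map.mp (List.mem_toFinset.mp hj)
    have h1 : (greyPart l).count s(6*(jf l),6*(jf l)+1) = 1 := by
      rw [(hjf l hl).2.1]; simp
    refine le_trans (le_of_eq h1.symm) (mem_le_sum ?_)
    exact List.mem_map_of_mem hl
  have hconsumedG : ∀ j ∈ I, ∀ l ∈ E, l.length ≠ 2 →
      (greyPart l).count s(6*j,6*j+1) = 0 := by
    intro j hj l hl hlen
    have h1 := htj_pos j hj
    have h2 := hsplitG j
    have h3 := htotG j (hIp j hj)
    have h4 : (((E.filter (fun l => ! decide (l.length = 2))).map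
        fun l => (greyPart l).count s(6*j,6*j+1))).sum = 0 := by omega
    refine sum_eq_zero_mem h4 ?_
    refine List.mem_map_of_mem ?_
    refine List.mem_filter.mpr ⟨hl, ?_⟩
    simp [hlen]
  have hconsumedB : ∀ j ∈ I, ∀ l ∈ E, l.length ≠ 2 →
      (blackPart l).count s(6*j,6*j+1) = 0 := by
    intro j hj l hl hlen
    have heq : (TL.map fun l => (blackPart l).count s(6*j,6*j+1)) =
        (TL.map fun l => (greyPart l).count s(6*j,6*j+1)) := by
      apply List.map_congr_left
      intro x hx
      rw [(hjf x hx).2.1, (hjf x hx).2.2]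
    have h1 := htj_pos j hj
    have h2 : ((TL.map fun l => (blackPart l).count s(6*j,6*j+1))).sum +
        (((E.filter (fun l => ! decide (l.length = 2))).map
          fun l => (blackPart l).count s(6*j,6*j+1))).sum
        = ((E.map fun l => (blackPart l).count s(6*j,6*j+1))).sum := map_sum_split E _ _
    have h3 : ((E.map fun l => (blackPart l).count s(6*j,6*j+1))).sum = 1 := by
      rw [countB]
      exact count_Gp_boundary (hIp j hj)
    rw [heq] at h2
    have h4 : (((E.filter (fun l => ! decide (l.length = 2))).map
        fun l => (blackPart l).count s(6*j,6*j+1))).sum = 0 := by omega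
    refine sum_eq_zero_mem h4 ?_
    refine List.mem_map_of_mem ?_
    refine List.mem_filter.mpr ⟨hl, ?_⟩
    simp [hlen]
  -- the region function
  set r : ℕ → ℕ := fun v => (I.filter (fun j => 6*j+1 ≤ v)).card with hr
  have hr_iff : ∀ a b : ℕ, (∀ j ∈ I, (6*j+1 ≤ a ↔ 6*j+1 ≤ b)) → r a = r b := by
    intro a b h
    rw [hr]
    simp only
    congr 1
    exact Finset.filter_congr h
  -- edges of nontrivial cycles do not change region
  have hr_edge : ∀ l ∈ E, l.length ≠ 2 → ∀ e ∈ cycleEdgeList l, ∀ u v : ℕ,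
      e = s(u,v) → r u = r v := by
    intro l hl hlen e he u v huv
    have hsym : ∀ a b : ℕ, s(a,b) = s(u,v) → r a = r b → r u = r v := by
      intro a b h1 h2
      rcases Sym2.eq_iff.mp h1 with ⟨rfl, rfl⟩ | ⟨rfl, rfl⟩
      · exact h2
      · exact h2.symm
    rcases cycle_black_or_grey he with hbl | hgr
    · -- black edge
      have h1 : 1 ≤ (blackPart l).count e := Multiset.one_le_count_iff_mem.mpr hbl
      have h2 : (blackPart l).count e ≤ (Gp p).count e := by
        rw [← countB]; exact mem_le_sum (List.mem_map_of_mem hl)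
      have h3 : e ∈ edgeL p := by
        have h25 : 1 ≤ (Gp p).count e := le_trans h1 h2
        exact Multiset.mem_coe.mp (Multiset.one_le_count_iff_mem.mp h25)
      have hbound : ∀ j0 : ℕ, j0 ≤ p → e = s(6*j0, 6*j0+1) → r u = r v := by
        intro j0 hj0 hej0
        by_cases hjI : j0 ∈ I
        · exfalso
          have := hconsumedB j0 hjI l hl hlen
          rw [← hej0] at this
          omega
        · refine hsym _ _ (hej0.symm.trans huv) ?_
          refine hr_iff _ _ ?_
          intro j hj
          have hne2 : j ≠ j0 := fun h => hjI (h ▸ hj)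
          constructor <;> (intro; omega)
      rcases mem_edgeL.mp h3 with ⟨i, hi, hbe⟩ | hbe
      · simp only [blkE, List.mem_cons, List.not_mem_nil, or_false] at hbe
        rcases hbe with rfl | rfl | rfl | rfl | rfl | rfl
        · exact hbound i (by omega) rfl
        all_goals {
          refine hsym _ _ huv ?_
          refine hr_iff _ _ ?_
          intro j hj
          constructor <;> (intro; omega) }
      · exact hbound p (le_refl p) hbe
    · -- grey edge
      have h1 : 1 ≤ (greyPart l).count e := Multiset.one_le_count_iff_mem.mpr hgr
      have h2 : (greyPart l).count e ≤ (greyM (6*p)).count e := by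
        rw [← countG]; exact mem_le_sum (List.mem_map_of_mem hl)
      have h3 : e ∈ greyM (6*p) := by
        have h25 : 1 ≤ (greyM (6*p)).count e := le_trans h1 h2
        exact Multiset.one_le_count_iff_mem.mp h25
      obtain ⟨i, hi, rfl⟩ := mem_greyM h3
      by_cases hsp : ∃ j ∈ I, i = 6*j
      · exfalso
        obtain ⟨j, hj, rfl⟩ := hsp
        have := hconsumedG j hj l hl hlen
        omega
      · refine hsym _ _ huv ?_
        refine hr_iff _ _ ?_
        intro j hj
        constructor
        · intro; omega
        · intro hle
          by_contra hcon
          have : i = 6*j := by omega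
          exact hsp ⟨j, hj, this⟩
  -- region is constant on each nontrivial cycle
  have hr_const : ∀ l ∈ E, l.length ≠ 2 → ∀ u ∈ l, ∀ v ∈ l, r u = r v := by
    intro l hl hlen
    have hlpos : 0 < l.length := List.length_pos_iff.mpr (hne l hl).1
    have key : ∀ k, (hk : k < l.length) → r (l[k]) = r (l[0]) := by
      intro k
      induction k with
      | zero => intro _; rfl
      | succ k ih =>
        intro hk
        have hedge := consecutive_edge (l := l) hk
        have hstep := hr_edge l hl hlen _ hedge (l[k]) (l[k+1]) rfl
        exact hstep.symm.trans (ih (by omega))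
    intro u hu v hv
    obtain ⟨ku, hku, rfl⟩ := List.mem_iff_getElem.mp hu
    obtain ⟨kv, hkv, rfl⟩ := List.mem_iff_getElem.mp hv
    rw [key ku hku, key kv hkv]
  -- strict monotonicity of region at chosen boundaries
  have hmono : ∀ a ∈ I, ∀ b ∈ I, a < b → r (6*a+1) < r (6*b+1) := by
    intro a ha b hb hab
    rw [hr]
    simp only
    apply Finset.card_lt_card
    constructor
    · intro j hj
      rw [Finset.mem_filter] at *
      exact ⟨hj.1, by omega⟩
    · intro hsub
      have hbmem : b ∈ I.filter (fun j => 6*j+1 ≤ 6*b+1) := Finset.mem_filter.mpr ⟨hb, by omega⟩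
      have := hsub hbmem
      rw [Finset.mem_filter] at this
      omega
  -- conclude
  rcases Nat.eq_zero_or_pos (c1D E) with hc0 | hc0
  · omega
  have hIne : I.Nonempty := by
    rw [← Finset.card_pos, hcard]; omega
  set M := I.max' hIne with hM
  -- for each chosen boundary except the largest, find a nontrivial cycle in its block
  have hF : ∀ j : ℕ, ∃ l : List ℕ, j ∈ I.erase M →
      (l ∈ E ∧ l.length ≠ 2 ∧ s(6*j+1,6*j+3) ∈ blackPart l) := by
    intro j
    by_cases hj : j ∈ I.erase M
    · have hjI : j ∈ I := Finset.mem_of_mem_erase hj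
      have hjM : j ≠ M := Finset.ne_of_mem_erase hj
      have hjp : j < p := by
        have h1 : j ≤ M := Finset.le_max' I j hjI
        have h2 : M ≤ p := hIp M (Finset.max'_mem I hIne)
        omega
      have hmem : s(6*j+1,6*j+3) ∈ Gp p := blockedge_mem hjp
      have h1 : 1 ≤ ((E.map fun l => (blackPart l).count s(6*j+1,6*j+3))).sum := by
        rw [countB]
        exact Multiset.one_le_count_iff_mem.mpr hmem
      obtain ⟨x, hx, hx1⟩ := exists_of_sum_pos h1
      obtain ⟨l, hl, rfl⟩ := List.mem_map.mp hx
      refine ⟨l, fun _ => ⟨hl, ?_, Multiset.one_le_count_iff_mem.mp hx1⟩⟩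
      intro hlen
      have hlTL : l ∈ TL := List.mem_filter.mpr ⟨hl, by simp [hlen]⟩
      have := (hjf l hlTL).2.2
      rw [this] at hx1
      have hxe : s(6*j+1,6*j+3) = s(6*(jf l), 6*(jf l)+1) := by
        have : s(6*j+1,6*j+3) ∈ ({s(6*(jf l), 6*(jf l)+1)} : Multiset (Sym2 ℕ)) := by
          exact Multiset.one_le_count_iff_mem.mp hx1
        simpa using this
      rw [Sym2.eq_iff] at hxe
      omega
    · exact ⟨[], fun h => absurd h hj⟩
  choose F hFspec using hF
  -- F is injective on I.erase M
  have hinj : Set.InjOn F (I.erase M) := by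
    intro j1 hj1' j2 hj2' heq
    have hj1 : j1 ∈ I.erase M := Finset.mem_coe.mp hj1'
    have hj2 : j2 ∈ I.erase M := Finset.mem_coe.mp hj2'
    obtain ⟨hl1, hlen1, hb1⟩ := hFspec j1 hj1
    obtain ⟨hl2, hlen2, hb2⟩ := hFspec j2 hj2
    rw [heq] at hl1 hlen1 hb1
    -- both block edges lie on the same cycle F j2
    have hmem1 : 6*j1+1 ∈ F j2 := by
      obtain ⟨u, v, he, hu, hv⟩ := cycleEdge_endpoints (black_sub_cycle hb1)
      have hm : (6*j1+1) ∈ s(u, v) := by rw [← he]; simp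
      rcases Sym2.mem_iff.mp hm with h | h
      · rw [h]; exact hu
      · rw [h]; exact hv
    have hmem2 : 6*j2+1 ∈ F j2 := by
      obtain ⟨u, v, he, hu, hv⟩ := cycleEdge_endpoints (black_sub_cycle hb2)
      have hm : (6*j2+1) ∈ s(u, v) := by rw [← he]; simp
      rcases Sym2.mem_iff.mp hm with h | h
      · rw [h]; exact hu
      · rw [h]; exact hv
    have hreq : r (6*j1+1) = r (6*j2+1) :=
      hr_const (F j2) hl2 hlen2 _ hmem1 _ hmem2
    by_contra hne12
    have hj1I : j1 ∈ I := Finset.mem_of_mem_erase hj1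
    have hj2I : j2 ∈ I := Finset.mem_of_mem_erase hj2
    rcases Nat.lt_or_ge j1 j2 with h | h
    · have := hmono j1 hj1I j2 hj2I h; omega
    · have hlt : j2 < j1 := by omega
      have := hmono j2 hj2I j1 hj1I hlt; omega
  -- count nontrivial cycles
  have hntd : (I.erase M).card ≤ ntD E := by
    have himg : ∀ j ∈ I.erase M, F j ∈ (E.filter (fun l => decide (l.length ≠ 2))).toFinset := by
      intro j hj
      obtain ⟨hl, hlen, _⟩ := hFspec j hj
      exact List.mem_toFinset.mpr (List.mem_filter.mpr ⟨hl, by simp [hlen]⟩)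
    calc (I.erase M).card ≤ (E.filter (fun l => decide (l.length ≠ 2))).toFinset.card :=
          Finset.card_le_card_of_injOn F himg hinj
    _ ≤ (E.filter (fun l => decide (l.length ≠ 2))).length := List.toFinset_card_le _
    _ = ntD E := rfl
  have herase : (I.erase M).card = I.card - 1 := Finset.card_erase_of_mem (Finset.max'_mem I hIne)
  omega

/-- For every p ≥ 2 there is a linear genome G on {0,…,6p+1} (n = 6p, with
{0,1} ∈ G) whose breakpoint number is 5p while the cycle-based lower bound
n + 1 + c* − 2c₁* equals 6p; hence the gap between the two bounds is unbounded. -/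
theorem gap_between_bounds_unbounded (p : ℕ) (hp : 2 ≤ p) :
    ∃ G : Multiset (Sym2 ℕ), IsLinearGenome (6*p) G ∧ s(0, 1) ∈ G ∧
      bp G = 5*p ∧
      (∃ D, OptDecomp (6*p) G D) ∧
      ∀ D, OptDecomp (6*p) G D →
        (6*p : ℤ) + 1 + D.length - 2 * c1D D = 6*p := by
  
  refine ⟨Gp p, ?_, ?_, bp_Gp p, ?_, ?_⟩
  · exact ⟨lgen p, lgen_perm p, rfl, by
      show ((0 :: lcore p) ++ [6*p+1]).getLast? = some (6*p+1)
      exact List.getLast?_concat, (pathEdges_lgen p).symm⟩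
  · refine Multiset.mem_coe.mpr (mem_edgeL.mpr (Or.inl ⟨0, by omega, ?_⟩))
    simp [blkE]
  · refine ⟨D0 p, isDecomp_D0 p, ?_⟩
    intro E hEd
    have hk := key_bound p E hEd
    have hl := length_eq_c1_add_nt E
    have h1 := len_D0 p
    have h2 := c1_D0 p
    omega
  · intro D hD
    have hub := hD.2 (D0 p) (isDecomp_D0 p)
    have hk := key_bound p D hD.1
    have hl := length_eq_c1_add_nt D
    have h1 := len_D0 p
    have h2 := c1_D0 p
    rw [h1, h2] at hub
    omega
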